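/- Let p = (p_k)_{k≥0} be a probability mass function on ℕ with p_0 ∈ (0,1) and p_0 + p_1 < 1, let f(s) = ∑_{k≥0} p_k s^k be its probability generating function and let r_f ∈ [1,∞] be the radius of convergence of f. Then: (i) if s_0 ∈ (0, r_f) satisfies s_0·f′(s_0) = f(s_0), the function s ↦ f(s)/s is strictly decreasing on (0, s_0) and strictly increasing on (s_0, r_f); (ii) if no s ∈ (0, r_f) satisfies s·f′(s) = f(s), the function s ↦ f(s)/s is strictly decreasing on (0, r_f). -/

import Mathlib

open MeasureTheory ProbabilityTheory Filter
open scoped ENNReal NNReal Topology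

noncomputable section

namespace CoevolvingNetwork

/-- The path from vertex `m` to the root `0` in the co-evolving random tree,
determined by the selection sequences: the incoming vertex `n+1` selects the
uniform vertex `V n ∈ {0,…,n}` and walks `Z (n+1)` steps from it towards the
root (stopping at the root), attaching there. -/
def pathTo (V Z : ℕ → ℕ) : ℕ → List ℕ
  | 0 => [0]
  | n + 1 =>
      let l := (pathTo V Z (min (V n) n)).drop (Z (n + 1))
      (n + 1) :: (if l = [] then [0] else l)
  termination_by m => m
  decreasing_by exact Nat.lt_succ_of_le (Nat.min_le_right _ _)

/-- The parent of vertex `v` (the root `0` is mapped to itself). -/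
def par (V Z : ℕ → ℕ) (v : ℕ) : ℕ := ((pathTo V Z v).drop 1).headD 0

/-- The degree of vertex `v` in the tree `T n` on vertices `{0,…,n}`:
the number of children of `v` among `{1,…,n}`, plus the edge to the parent
unless `v` is the root. -/
def degree (V Z : ℕ → ℕ) (n v : ℕ) : ℕ :=
  ((Finset.Icc 1 n).filter fun w => par V Z w = v).card + (if v = 0 then 0 else 1)

/-- The height of the tree `T n`: maximal distance from the root. -/
def height (V Z : ℕ → ℕ) (n : ℕ) : ℕ :=
  (Finset.range (n + 1)).sup fun v => (pathTo V Z v).length - 1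

/-- `pathCount V Z n l v` is the number of directed paths of length `l` ending at `v`
in `T n`, i.e. the number of vertices `w ≤ n` whose `l`-fold parent iterate is `v`
(with matching depths). -/
def pathCount (V Z : ℕ → ℕ) (n l v : ℕ) : ℕ :=
  ((Finset.range (n + 1)).filter fun w => (pathTo V Z w)[l]? = some v).card

/-- Graph-normalized PageRank of vertex `v` in `T n` with damping factor `c`. -/
def pageRank (V Z : ℕ → ℕ) (c : ℝ) (n v : ℕ) : ℝ :=
  (1 - c) * (1 + ∑' l : ℕ, c ^ (l + 1) * (pathCount V Z n (l + 1) v : ℝ))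

/-- The probability generating function `f(s) = ∑ p_k s^k`. -/
def pgf (p : ℕ → ℝ) (s : ℝ) : ℝ := ∑' k, p k * s ^ k

/-- The derivative `f′(s) = ∑ k p_k s^(k-1)` of the generating function. -/
def pgf' (p : ℕ → ℝ) (s : ℝ) : ℝ := ∑' k : ℕ, ((k + 1 : ℕ) : ℝ) * p (k + 1) * s ^ k

/-- `1/R = inf_{s>0} f(s)/s`, with the convention `f(s) = ∞` beyond the radius of
convergence: the infimum is over those `s > 0` where the series converges. -/
def invR (p : ℕ → ℝ) : ℝ :=
  sInf {x | ∃ s : ℝ, 0 < s ∧ Summable (fun k => p k * s ^ k) ∧ x = pgf p s / s}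

/-- The random tree model: on a probability space `(Ω, P)`, the uniform selections
`V n` (uniform on `{0,…,n}`) and the jump variables `Z n` (law `p`), all jointly
independent. -/
structure Model {Ω : Type*} [MeasurableSpace Ω] (P : Measure Ω)
    (p : ℕ → ℝ) (V Z : ℕ → Ω → ℕ) : Prop where
  prob : IsProbabilityMeasure P
  pmf_nonneg : ∀ k, 0 ≤ p k
  pmf_sum : ∑' k, p k = 1
  meas_V : ∀ n, Measurable (V n)
  meas_Z : ∀ n, Measurable (Z n)
  V_le : ∀ n ω, V n ω ≤ n
  V_unif : ∀ n k, k ≤ n → P {ω | V n ω = k} = (((n : ℝ≥0∞) + 1))⁻¹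
  Z_law : ∀ n k, P {ω | Z n ω = k} = ENNReal.ofReal (p k)
  indep : iIndepFun (Sum.elim V Z) P

/-- Assumption B of the paper: `p₀ ∈ (0,1)`, `p₀ + p₁ < 1`, and the support of `p`
has gcd one (aperiodicity). -/
def AssumptionB (p : ℕ → ℝ) : Prop :=
  0 < p 0 ∧ p 0 < 1 ∧ p 0 + p 1 < 1 ∧ ∀ d : ℕ, (∀ j, 0 < p j → d ∣ j) → d = 1


/-- `s₀`: the unique positive root of `s f′(s) = f(s)` (within the domain of
convergence) if such a root exists, and otherwise the radius of convergence of `f`. -/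
def IsS0 (p : ℕ → ℝ) (s0 : ℝ) : Prop :=
  (0 < s0 ∧ Summable (fun k => p k * s0 ^ k) ∧ s0 * pgf' p s0 = pgf p s0 ∧
    ∀ s : ℝ, 0 < s → Summable (fun k => p k * s ^ k) → s * pgf' p s = pgf p s → s = s0)
  ∨ ((∀ s : ℝ, 0 < s → Summable (fun k => p k * s ^ k) → s * pgf' p s ≠ pgf p s) ∧
      (∀ s : ℝ, 0 < s → s < s0 → Summable (fun k => p k * s ^ k)) ∧
      (∀ s : ℝ, s0 < s → ¬ Summable (fun k => p k * s ^ k)))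

/-! The gap `g(s) = s f′(s) - f(s) = ∑ (k - 1) p_k s^k` is nondecreasing, continuous, and
`g(0) = -p₀ < 0`. Since `p_k > 0` for some `k ≥ 2`, `f` lies strictly above each of its tangent
lines; comparing `f(x)` with the tangent at `y` (or `f(y)` with the tangent at `x`) shows that for
`x < y`, `f(y)/y < f(x)/x` when `g(y) ≤ 0`, and `f(x)/x < f(y)/y` when `g(x) ≥ 0`. A root `s₀`
of `g` splits the domain into these two regimes; without a root, `g < 0` throughout by the
intermediate value theorem. -/

theorem summable_norm_natCast_mul_mul_pow {a : ℕ → ℝ} {s t : ℝ}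
    (ht : Summable fun k => a k * t ^ k) (hst : |s| < |t|) :
    Summable fun k : ℕ => ‖(k : ℝ) * a k * s ^ k‖ := by
  obtain ⟨C, hC⟩ := ht.tendsto_atTop_zero.norm.bddAbove_range
  have ht0 : 0 < |t| := (abs_nonneg s).trans_lt hst
  set r := |s| / |t| with hr
  have hr1 : ‖r‖ < 1 := by
    rwa [Real.norm_eq_abs, abs_of_nonneg (by positivity), div_lt_one ht0]
  have hgeom : Summable fun k : ℕ => C * ((k : ℝ) ^ 1 * r ^ k) :=
    (summable_pow_mul_geometric_of_norm_lt_one 1 hr1).mul_left C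
  refine hgeom.of_nonneg_of_le (fun _ => norm_nonneg _) fun k => ?_
  have hs : |s| ^ k = |t| ^ k * r ^ k := by rw [hr, div_pow, mul_div_cancel₀ _ (by positivity)]
  calc ‖(k : ℝ) * a k * s ^ k‖ = ‖a k * t ^ k‖ * ((k : ℝ) ^ 1 * r ^ k) := by
        simp only [norm_mul, norm_pow, Real.norm_eq_abs, Nat.abs_cast, hs]; ring
    _ ≤ C * ((k : ℝ) ^ 1 * r ^ k) := by gcongr; exact hC ⟨k, rfl⟩

theorem continuousOn_tsum_mul_pow {a : ℕ → ℝ} {y : ℝ} (hy : Summable fun k => ‖a k * y ^ k‖) :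
    ContinuousOn (fun x => ∑' k, a k * x ^ k) (Set.Icc (-y) y) := by
  refine continuousOn_tsum (fun k => (continuous_const.mul (continuous_pow k)).continuousOn) hy
    fun k x hx => ?_
  have hxy : |x| ≤ |y| := (abs_le.2 hx).trans (le_abs_self y)
  simp only [norm_mul, norm_pow, Real.norm_eq_abs]
  gcongr

-- Bernoulli's inequality, multiplied through by `x` to avoid the truncated exponent `k - 1`.
theorem pow_tangent_le (k : ℕ) {x y : ℝ} (hx : 0 < x) (hy : 0 ≤ y) :
    x ^ (k + 1) + k * x ^ k * (y - x) ≤ x * y ^ k := by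
  have h := one_add_mul_le_pow (a := (y - x) / x) (by rw [le_div_iff₀ hx]; linarith) k
  rw [add_div_eq_mul_add_div _ _ hx.ne', one_mul, add_sub_cancel, div_pow,
    le_div_iff₀ (by positivity)] at h
  calc x ^ (k + 1) + k * x ^ k * (y - x) = x * ((1 + k * ((y - x) / x)) * x ^ k) := by
        field_simp; ring
    _ ≤ x * y ^ k := by gcongr

theorem pow_tangent_lt {k : ℕ} (hk : 2 ≤ k) {x y : ℝ} (hx : 0 < x) (hy : 0 ≤ y) (hxy : x ≠ y) :
    x ^ (k + 1) + k * x ^ k * (y - x) < x * y ^ k := by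
  have h := one_add_mul_self_lt_rpow_one_add (s := (y - x) / x) (p := k)
    (by rw [le_div_iff₀ hx]; linarith) (div_ne_zero (sub_ne_zero.2 hxy.symm) hx.ne')
    (by exact_mod_cast hk)
  rw [add_div_eq_mul_add_div _ _ hx.ne', one_mul, add_sub_cancel, Real.rpow_natCast, div_pow,
    lt_div_iff₀ (by positivity)] at h
  calc x ^ (k + 1) + k * x ^ k * (y - x) = x * ((1 + k * ((y - x) / x)) * x ^ k) := by
        field_simp; ring
    _ < x * y ^ k := by gcongr

theorem exists_two_le_pos_of_add_lt_tsum {p : ℕ → ℝ} (hp : ∀ k, 0 ≤ p k)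
    (h : p 0 + p 1 < ∑' k, p k) : ∃ k, 2 ≤ k ∧ 0 < p k := by
  by_contra! hle
  have hsum : ∑' k, p k = ∑ k ∈ Finset.range 2, p k :=
    tsum_eq_sum fun k hk => le_antisymm (hle k (by simp at hk; omega)) (hp k)
  simp [hsum, Finset.sum_range_succ] at h

theorem pgf_zero (p : ℕ → ℝ) : pgf p 0 = p 0 := by
  rw [pgf, tsum_eq_single 0 fun k hk => by simp [hk]]
  simp

theorem mul_pgf'_eq_tsum (p : ℕ → ℝ) (s : ℝ) :
    s * pgf' p s = ∑' k : ℕ, (k : ℝ) * p k * s ^ k := by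
  have hsupp : (Function.support fun k : ℕ => (k : ℝ) * p k * s ^ k) ⊆ Set.range Nat.succ :=
    fun k hk => (Nat.exists_eq_succ_of_ne_zero (by rintro rfl; simp at hk)).imp fun _ h => h.symm
  rw [← Nat.succ_injective.tsum_eq hsupp, pgf', ← tsum_mul_left]
  congr 1 with k
  simp only [Nat.succ_eq_add_one, pow_succ]
  ring

section Pgf

variable {p : ℕ → ℝ}

theorem summable_mul_pow_of_le (hp : ∀ k, 0 ≤ p k) {s t : ℝ} (hs : 0 ≤ s) (hst : s ≤ t)
    (ht : Summable fun k => p k * t ^ k) : Summable fun k => p k * s ^ k :=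
  ht.of_nonneg_of_le (fun k => mul_nonneg (hp k) (pow_nonneg hs k))
    fun k => mul_le_mul_of_nonneg_left (pow_le_pow_left₀ hs hst k) (hp k)

theorem summable_natCast_mul_mul_pow_of_lt {s t : ℝ} (hs : 0 ≤ s) (hst : s < t)
    (ht : Summable fun k => p k * t ^ k) : Summable fun k : ℕ => (k : ℝ) * p k * s ^ k :=
  (summable_norm_natCast_mul_mul_pow ht
    (by rwa [abs_of_nonneg hs, abs_of_pos (hs.trans_lt hst)])).of_norm

theorem hasSum_mul_pgf'_sub_pgf {s : ℝ} (hf : Summable fun k => p k * s ^ k)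
    (hm : Summable fun k : ℕ => (k : ℝ) * p k * s ^ k) :
    HasSum (fun k : ℕ => ((k : ℝ) - 1) * p k * s ^ k) (s * pgf' p s - pgf p s) := by
  have hterm : (fun k : ℕ => ((k : ℝ) - 1) * p k * s ^ k) =
      fun k : ℕ => (k : ℝ) * p k * s ^ k - p k * s ^ k := by
    ext k; ring
  rw [hterm, mul_pgf'_eq_tsum, pgf]
  exact hm.hasSum.sub hf.hasSum

theorem monotoneOn_mul_pgf'_sub_pgf (hp : ∀ k, 0 ≤ p k) {t : ℝ}
    (ht : Summable fun k => p k * t ^ k) :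
    MonotoneOn (fun s => s * pgf' p s - pgf p s) (Set.Ico 0 t) := by
  intro x hx y hy hxy
  have hsum {s} (hs : s ∈ Set.Ico 0 t) := hasSum_mul_pgf'_sub_pgf
    (summable_mul_pow_of_le hp hs.1 hs.2.le ht) (summable_natCast_mul_mul_pow_of_lt hs.1 hs.2 ht)
  refine hasSum_le (fun k => ?_) (hsum hx) (hsum hy)
  rcases k with _ | k
  · simp
  · have : (0 : ℝ) ≤ ((k + 1 : ℕ) : ℝ) - 1 := by push_cast; linarith
    have := hp (k + 1)
    gcongr
    exact hx.1

theorem continuousOn_mul_pgf'_sub_pgf (hp : ∀ k, 0 ≤ p k) {y t : ℝ} (hy : 0 ≤ y) (hyt : y < t)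
    (ht : Summable fun k => p k * t ^ k) :
    ContinuousOn (fun s => s * pgf' p s - pgf p s) (Set.Icc 0 y) := by
  have hf : Summable fun k => ‖p k * y ^ k‖ := by
    simpa only [Real.norm_eq_abs] using (summable_mul_pow_of_le hp hy hyt.le ht).abs
  have hm := summable_norm_natCast_mul_mul_pow ht
    (by rwa [abs_of_nonneg hy, abs_of_pos (hy.trans_lt hyt)])
  simp only [mul_pgf'_eq_tsum]
  exact ((continuousOn_tsum_mul_pow hm).sub (continuousOn_tsum_mul_pow hf)).mono
    (Set.Icc_subset_Icc (by linarith) le_rfl)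

theorem mul_pgf'_lt_pgf_of_forall_ne (hp : ∀ k, 0 ≤ p k) (h0 : 0 < p 0) {y t : ℝ} (hy : 0 ≤ y)
    (hyt : y < t) (ht : Summable fun k => p k * t ^ k)
    (hne : ∀ s ∈ Set.Ioc 0 y, s * pgf' p s ≠ pgf p s) : y * pgf' p y < pgf p y := by
  by_contra! hle
  obtain ⟨c, hc, hc0⟩ := intermediate_value_Icc hy (continuousOn_mul_pgf'_sub_pgf hp hy hyt ht)
    ⟨by simp [pgf_zero, h0.le], sub_nonneg.2 hle⟩
  rcases hc.1.eq_or_lt with rfl | hcpos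
  · simp [pgf_zero] at hc0
    linarith
  · exact hne c ⟨hcpos, hc.2⟩ (sub_eq_zero.1 hc0)

theorem pgf_tangent_lt (hp : ∀ k, 0 ≤ p k) {j : ℕ} (hj2 : 2 ≤ j) (hj : 0 < p j) {x y : ℝ}
    (hx : 0 < x) (hy : 0 ≤ y) (hxy : x ≠ y) (hfx : Summable fun k => p k * x ^ k)
    (hfy : Summable fun k => p k * y ^ k) (hmx : Summable fun k : ℕ => (k : ℝ) * p k * x ^ k) :
    x * pgf p x + x * pgf' p x * (y - x) < x * pgf p y := by
  have hmx' : HasSum (fun k : ℕ => (k : ℝ) * p k * x ^ k) (x * pgf' p x) := by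
    rw [mul_pgf'_eq_tsum]; exact hmx.hasSum
  refine hasSum_lt (i := j) (fun k => ?_) ?_ ((hfx.hasSum.mul_left x).add (hmx'.mul_right (y - x)))
    (hfy.hasSum.mul_left x)
  · convert mul_le_mul_of_nonneg_left (pow_tangent_le k hx hy) (hp k) using 1 <;> ring
  · convert mul_lt_mul_of_pos_left (pow_tangent_lt hj2 hx hy hxy) hj using 1 <;> ring

theorem pgf_div_lt_pgf_div_of_mul_pgf'_le (hp : ∀ k, 0 ≤ p k) {j : ℕ} (hj2 : 2 ≤ j)
    (hj : 0 < p j) {x y t : ℝ} (hx : 0 < x) (hxy : x < y) (hyt : y < t)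
    (ht : Summable fun k => p k * t ^ k) (hy : y * pgf' p y ≤ pgf p y) :
    pgf p y / y < pgf p x / x := by
  have hy0 := hx.trans hxy
  have tangent := pgf_tangent_lt hp hj2 hj hy0 hx.le hxy.ne'
    (summable_mul_pow_of_le hp hy0.le hyt.le ht)
    (summable_mul_pow_of_le hp hx.le (hxy.trans hyt).le ht)
    (summable_natCast_mul_mul_pow_of_lt hy0.le hyt ht)
  rw [div_lt_div_iff₀ hy0 hx]
  nlinarith [mul_nonneg (sub_nonneg.2 hxy.le) (sub_nonneg.2 hy)]

theorem pgf_div_lt_pgf_div_of_le_mul_pgf' (hp : ∀ k, 0 ≤ p k) {j : ℕ} (hj2 : 2 ≤ j)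
    (hj : 0 < p j) {x y t : ℝ} (hx : 0 < x) (hxy : x < y) (hyt : y < t)
    (ht : Summable fun k => p k * t ^ k) (hx' : pgf p x ≤ x * pgf' p x) :
    pgf p x / x < pgf p y / y := by
  have tangent := pgf_tangent_lt hp hj2 hj hx (hx.trans hxy).le hxy.ne
    (summable_mul_pow_of_le hp hx.le (hxy.trans hyt).le ht)
    (summable_mul_pow_of_le hp (hx.trans hxy).le hyt.le ht)
    (summable_natCast_mul_mul_pow_of_lt hx.le (hxy.trans hyt) ht)
  rw [div_lt_div_iff₀ hx (hx.trans hxy)]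
  nlinarith [mul_nonneg (sub_nonneg.2 hxy.le) (sub_nonneg.2 hx')]

end Pgf

theorem pgf_ratio_monotonicity_general
    (p : ℕ → ℝ) (hp_nonneg : ∀ k, 0 ≤ p k) (hp_sum : ∑' k, p k = 1)
    (h0 : 0 < p 0) (h01 : p 0 + p 1 < 1)
    (rf : ℝ≥0∞)
    (hrf : ∀ s : ℝ, 0 < s →
      (ENNReal.ofReal s < rf → Summable (fun k => p k * s ^ k)) ∧
      (rf < ENNReal.ofReal s → ¬ Summable (fun k => p k * s ^ k))) :
    (∀ s0 : ℝ, 0 < s0 → ENNReal.ofReal s0 < rf → s0 * pgf' p s0 = pgf p s0 →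
      StrictAntiOn (fun s => pgf p s / s) (Set.Ioo 0 s0) ∧
      StrictMonoOn (fun s => pgf p s / s) {s : ℝ | s0 < s ∧ ENNReal.ofReal s < rf}) ∧
    ((∀ s : ℝ, 0 < s → ENNReal.ofReal s < rf → s * pgf' p s ≠ pgf p s) →
      StrictAntiOn (fun s => pgf p s / s) {s : ℝ | 0 < s ∧ ENNReal.ofReal s < rf}) := by
  obtain ⟨j, hj2, hj⟩ := exists_two_le_pos_of_add_lt_tsum hp_nonneg (hp_sum ▸ h01)
  have hdom : ∀ s, 0 < s → ENNReal.ofReal s < rf →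
      ∃ t, s < t ∧ Summable fun k => p k * t ^ k := by
    intro s hs hsrf
    obtain ⟨t, -, hst, htrf⟩ := ENNReal.lt_iff_exists_real_btwn.1 hsrf
    have hst := (ENNReal.ofReal_lt_ofReal_iff'.1 hst).1
    exact ⟨t, hst, (hrf t (hs.trans hst)).1 htrf⟩
  refine ⟨fun s0 hs0 hs0rf hroot => ⟨?_, ?_⟩, fun hno => ?_⟩
  · obtain ⟨t, hs0t, ht⟩ := hdom s0 hs0 hs0rf
    intro x hx y hy hxy
    have hgy := monotoneOn_mul_pgf'_sub_pgf hp_nonneg ht ⟨hy.1.le, hy.2.trans hs0t⟩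
      ⟨hs0.le, hs0t⟩ hy.2.le
    exact pgf_div_lt_pgf_div_of_mul_pgf'_le hp_nonneg hj2 hj hx.1 hxy (hy.2.trans hs0t) ht
      (by simpa [hroot] using hgy)
  · intro x hx y hy hxy
    obtain ⟨t, hyt, ht⟩ := hdom y (hs0.trans (hx.1.trans hxy)) hy.2
    have hgx := monotoneOn_mul_pgf'_sub_pgf hp_nonneg ht ⟨hs0.le, hx.1.trans (hxy.trans hyt)⟩
      ⟨(hs0.trans hx.1).le, hxy.trans hyt⟩ hx.1.le
    exact pgf_div_lt_pgf_div_of_le_mul_pgf' hp_nonneg hj2 hj (hs0.trans hx.1) hxy hyt ht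
      (by simpa [hroot] using hgx)
  · intro x hx y hy hxy
    obtain ⟨t, hyt, ht⟩ := hdom y hy.1 hy.2
    refine pgf_div_lt_pgf_div_of_mul_pgf'_le hp_nonneg hj2 hj hx.1 hxy hyt ht
      (mul_pgf'_lt_pgf_of_forall_ne hp_nonneg h0 hy.1.le hyt ht fun s hs => ?_).le
    exact hno s hs.1 ((ENNReal.ofReal_le_ofReal hs.2).trans_lt hy.2)

/-- monotonicity of `s ↦ f(s)/s` on the domain of convergence:
strictly decreasing before the root `s₀` of `s f′(s) = f(s)` and strictly
increasing after it; strictly decreasing throughout if no such root exists. -/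
theorem pgf_ratio_monotonicity
    (p : ℕ → ℝ) (hp_nonneg : ∀ k, 0 ≤ p k) (hp_sum : ∑' k, p k = 1)
    (h0 : 0 < p 0) (h0' : p 0 < 1) (h01 : p 0 + p 1 < 1)
    (rf : ℝ≥0∞) (hrf1 : 1 ≤ rf)
    (hrf : ∀ s : ℝ, 0 < s →
      (ENNReal.ofReal s < rf → Summable (fun k => p k * s ^ k)) ∧
      (rf < ENNReal.ofReal s → ¬ Summable (fun k => p k * s ^ k))) :
    (∀ s0 : ℝ, 0 < s0 → ENNReal.ofReal s0 < rf → s0 * pgf' p s0 = pgf p s0 →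
      StrictAntiOn (fun s => pgf p s / s) (Set.Ioo 0 s0) ∧
      StrictMonoOn (fun s => pgf p s / s) {s : ℝ | s0 < s ∧ ENNReal.ofReal s < rf}) ∧
    ((∀ s : ℝ, 0 < s → ENNReal.ofReal s < rf → s * pgf' p s ≠ pgf p s) →
      StrictAntiOn (fun s => pgf p s / s) {s : ℝ | 0 < s ∧ ENNReal.ofReal s < rf}) :=
  pgf_ratio_monotonicity_general p hp_nonneg hp_sum h0 h01 rf hrf

end CoevolvingNetwork
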